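/- For each of the query languages CQ[=], CQ[=,≠], CRPQ[=] and CRPQ[=,≠], the constraint class GFD is distinct in expressive power from each of 1GGD, mPG-Keys and PG-Keys: GFD ≠ 1GGD, GFD ≠ mPG-Keys, and GFD ≠ PG-Keys. -/
import Mathlib


namespace PGC

/-- Objects (vertex/edge identifiers). -/
abbrev Obj := ℕ
/-- Labels. -/
abbrev Lab := ℕ
/-- Property keys. -/
abbrev Key := ℕ
/-- Data values. -/
abbrev Val := ℕ
/-- Variables. -/
abbrev Var := ℕ

/-- A property graph `G = (V, E, η, λ, π)`. -/
structure PGraph where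
  V : Finset Obj
  E : Finset Obj
  disj : Disjoint V E
  src : Obj → Obj
  tgt : Obj → Obj
  lab : Obj → Finset Lab
  prop : Obj → Key → Option Val
  src_mem : ∀ e ∈ E, src e ∈ V
  tgt_mem : ∀ e ∈ E, tgt e ∈ V

/-- A walk (path), given by its start vertex and its list of edges. -/
structure Walk where
  start : Obj
  edges : List Obj
deriving DecidableEq

/-- The list of edges forms a walk in `G` starting at the given vertex. -/
def PGraph.walkFrom (G : PGraph) : Obj → List Obj → Prop
  | u, [] => u ∈ G.V
  | u, e :: es => e ∈ G.E ∧ G.src e = u ∧ G.walkFrom (G.tgt e) es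

/-- The final vertex of a walk. -/
def Walk.endpt (G : PGraph) (w : Walk) : Obj :=
  w.edges.foldl (fun _ e => G.tgt e) w.start

/-- What a variable can be bound to: an object (vertex or edge) or a walk. -/
inductive Target where
  | obj (o : Obj)
  | walk (w : Walk)
deriving DecidableEq

/-- Atoms of conjunctive (regular path) queries. -/
inductive Atom where
  | vertex (x : Var) (ls : List Lab)
  | edge (x e y : Var) (ls : List Lab)
  | path (x p y : Var) (r : RegularExpression Lab)

def Atom.vars : Atom → Finset Var
  | .vertex x _ => {x}
  | .edge x e y _ => {x, e, y}
  | .path x p y _ => {x, p, y}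

def Atom.isPath : Atom → Prop
  | .path _ _ _ _ => True
  | _ => False

/-- A query is a finite conjunction of atoms. -/
abbrev Query := List Atom

/-- Variables of a query. -/
def qvars (Q : Query) : Finset Var := Q.foldr (fun a s => a.vars ∪ s) ∅

/-- Satisfaction of an atom by an assignment `h` in a property graph. -/
def Atom.sat (G : PGraph) (h : Var → Target) : Atom → Prop
  | .vertex x ls => ∃ o, h x = .obj o ∧ o ∈ G.V ∧ ∀ l ∈ ls, l ∈ G.lab o
  | .edge x e y ls => ∃ ox oe oy, h x = .obj ox ∧ h e = .obj oe ∧ h y = .obj oy ∧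
      oe ∈ G.E ∧ G.src oe = ox ∧ G.tgt oe = oy ∧ ∀ l ∈ ls, l ∈ G.lab oe
  | .path x p y r => ∃ ox w oy, h x = .obj ox ∧ h p = .walk w ∧ h y = .obj oy ∧
      w.start = ox ∧ G.walkFrom ox w.edges ∧ Walk.endpt G w = oy ∧
      ∃ word : List Lab, word ∈ r.matches' ∧
        List.Forall₂ (fun e l => l ∈ G.lab e) w.edges word

/-- A match of a query `Q` over `G` (all-walk semantics). -/
def Match (G : PGraph) (Q : Query) (h : Var → Target) : Prop :=
  ∀ a ∈ Q, a.sat G h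

/-- The property value `h(x).a`, if defined. -/
def propOf (G : PGraph) (h : Var → Target) (x : Var) (a : Key) : Option Val :=
  match h x with
  | .obj o => G.prop o a
  | .walk _ => none

/-- Data predicates. -/
inductive Pred where
  | propEq (x : Var) (a : Key) (y : Var) (b : Key)   -- x.a = y.b
  | propEqC (x : Var) (a : Key) (c : Val)            -- x.a = c
  | ex (x : Var) (a : Key)                           -- ex(x.a)
  | idEq (x y : Var)                                 -- x = y
  | propNe (x : Var) (a : Key) (y : Var) (b : Key)   -- x.a ≠ y.b
  | propNeC (x : Var) (a : Key) (c : Val)            -- x.a ≠ c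
  | idNe (x y : Var)                                 -- x ≠ y

/-- Satisfaction of a data predicate. -/
def Pred.sat (G : PGraph) (h : Var → Target) : Pred → Prop
  | .propEq x a y b => ∃ v, propOf G h x a = some v ∧ propOf G h y b = some v
  | .propEqC x a c => propOf G h x a = some c
  | .ex x a => (propOf G h x a).isSome
  | .idEq x y => h x = h y
  | .propNe x a y b => ∃ v w, propOf G h x a = some v ∧ propOf G h y b = some w ∧ v ≠ w
  | .propNeC x a c => ∃ v, propOf G h x a = some v ∧ v ≠ c
  | .idNe x y => h x ≠ h y

def Pred.vars : Pred → Finset Var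
  | .propEq x _ y _ => {x, y}
  | .propEqC x _ _ => {x}
  | .ex x _ => {x}
  | .idEq x y => {x, y}
  | .propNe x _ y _ => {x, y}
  | .propNeC x _ _ => {x}
  | .idNe x y => {x, y}

/-- `h ⊨ C`: every predicate of `C` holds under `h`. -/
def satC (G : PGraph) (h : Var → Target) (C : List Pred) : Prop :=
  ∀ p ∈ C, p.sat G h

/-- A predicate uses only equality (no inequality). -/
def Pred.isEq : Pred → Prop
  | .propEq _ _ _ _ => True
  | .propEqC _ _ _ => True
  | .ex _ _ => True
  | .idEq _ _ => True
  | _ => False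

/-- A predicate is an equality with a constant. -/
def Pred.isEqC : Pred → Prop
  | .propEqC _ _ _ => True
  | _ => False

/-- A query language: whether path atoms are allowed, and which data predicates are allowed. -/
structure QLang where
  allowPaths : Bool
  allowPred : Pred → Prop

/-- CQ[=] -/
def CQeq : QLang := ⟨false, Pred.isEq⟩
/-- CQ[=,≠] -/
def CQeqNe : QLang := ⟨false, fun _ => True⟩
/-- CRPQ[=] -/
def CRPQeq : QLang := ⟨true, Pred.isEq⟩
/-- CRPQ[=,≠] -/
def CRPQeqNe : QLang := ⟨true, fun _ => True⟩
/-- CRPQ[=_c] -/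
def CRPQeqC : QLang := ⟨true, Pred.isEqC⟩

/-- The query belongs to the query language. -/
def QueryIn (L : QLang) (Q : Query) : Prop :=
  ∀ a ∈ Q, a.isPath → L.allowPaths = true

/-- All predicates belong to the query language. -/
def PredsIn (L : QLang) (C : List Pred) : Prop :=
  ∀ p ∈ C, L.allowPred p

/-- Graph functional dependency `(Q(x̄,ȳ), C_s(x̄,ȳ) ⇒ C_t(x̄))`. -/
structure GFD where
  shared : List Var
  Q : Query
  Cs : List Pred
  Ct : List Pred

def GFD.wf (L : QLang) (φ : GFD) : Prop :=
  QueryIn L φ.Q ∧ PredsIn L φ.Cs ∧ PredsIn L φ.Ct ∧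
  φ.shared.toFinset ⊆ qvars φ.Q ∧
  (∀ p ∈ φ.Ct, p.vars ⊆ φ.shared.toFinset) ∧
  (∀ p ∈ φ.Cs, p.vars ⊆ qvars φ.Q)

def GFD.sat (φ : GFD) (G : PGraph) : Prop :=
  ∀ h, Match G φ.Q h → satC G h φ.Cs → satC G h φ.Ct

def GFD.allVars (φ : GFD) : Finset Var :=
  qvars φ.Q ∪ φ.shared.toFinset ∪ (φ.Cs ++ φ.Ct).foldr (fun p s => p.vars ∪ s) ∅

/-- Graph generating dependency `(Q_s(x̄,ȳ), C_s(x̄,ȳ) ⇒ Q_t(x̄,z̄), C_t(x̄,z̄))`. -/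
structure GGD where
  shared : List Var
  Qs : Query
  Cs : List Pred
  Qt : Query
  Ct : List Pred

def GGD.wf (L : QLang) (φ : GGD) : Prop :=
  QueryIn L φ.Qs ∧ QueryIn L φ.Qt ∧ PredsIn L φ.Cs ∧ PredsIn L φ.Ct ∧
  φ.shared.toFinset ⊆ qvars φ.Qs ∧
  qvars φ.Qs ∩ qvars φ.Qt ⊆ φ.shared.toFinset ∧
  (∀ p ∈ φ.Cs, p.vars ⊆ qvars φ.Qs) ∧
  (∀ p ∈ φ.Ct, p.vars ⊆ qvars φ.Qt ∪ φ.shared.toFinset)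

def GGD.sat (φ : GGD) (G : PGraph) : Prop :=
  ∀ hs, Match G φ.Qs hs → satC G hs φ.Cs →
    ∃ ht, Match G φ.Qt ht ∧ (∀ v ∈ φ.shared, ht v = hs v) ∧ satC G ht φ.Ct

/-- Assertion keywords of PG-Keys. -/
inductive KW where
  | mandatory
  | exclusive
  | singleton
deriving DecidableEq

/-- Entries of a key expression: a variable or a property reference `v.a`. -/
inductive KeyExpr where
  | var (v : Var)
  | ref (v : Var) (a : Key)

def KeyExpr.vars : KeyExpr → Finset Var
  | .var v => {v}
  | .ref v _ => {v}

/-- Value of a key-expression entry under a match, if defined. -/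
def KeyExpr.eval (G : PGraph) (h : Var → Target) : KeyExpr → Option (Target ⊕ Val)
  | .var v => some (Sum.inl (h v))
  | .ref v a => (propOf G h v a).map Sum.inr

def keysDefined (G : PGraph) (h : Var → Target) (ks : List KeyExpr) : Prop :=
  ∀ k ∈ ks, (KeyExpr.eval G h k).isSome

def keysEq (G : PGraph) (h h' : Var → Target) (ks : List KeyExpr) : Prop :=
  ∀ k ∈ ks, KeyExpr.eval G h k = KeyExpr.eval G h' k

/-- A PG-Key `(Q_s(x,ȳ), C_s ⇒ α(ν̄), Q_t(x,z̄), C_t)`. -/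
structure PGKey where
  x : Var
  Qs : Query
  Cs : List Pred
  kw : KW
  keys : List KeyExpr
  Qt : Query
  Ct : List Pred

def PGKey.wf (L : QLang) (ψ : PGKey) : Prop :=
  QueryIn L ψ.Qs ∧ QueryIn L ψ.Qt ∧ PredsIn L ψ.Cs ∧ PredsIn L ψ.Ct ∧
  ψ.x ∈ qvars ψ.Qs ∧ ψ.x ∈ qvars ψ.Qt ∧
  qvars ψ.Qs ∩ qvars ψ.Qt = {ψ.x} ∧
  (∀ p ∈ ψ.Cs, p.vars ⊆ qvars ψ.Qs) ∧
  (∀ p ∈ ψ.Ct, p.vars ⊆ qvars ψ.Qt) ∧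
  (∀ k ∈ ψ.keys, k.vars ⊆ qvars ψ.Qt)

def PGKey.sat (ψ : PGKey) (G : PGraph) : Prop :=
  match ψ.kw with
  | .mandatory =>
      ∀ hs, Match G ψ.Qs hs → satC G hs ψ.Cs →
        ∃ ht, Match G ψ.Qt ht ∧ ht ψ.x = hs ψ.x ∧ satC G ht ψ.Ct ∧
          keysDefined G ht ψ.keys
  | .singleton =>
      ∀ hs, Match G ψ.Qs hs → satC G hs ψ.Cs →
        ∀ ht ht', Match G ψ.Qt ht → satC G ht ψ.Ct → ht ψ.x = hs ψ.x →
          Match G ψ.Qt ht' → satC G ht' ψ.Ct → ht' ψ.x = hs ψ.x →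
          keysDefined G ht ψ.keys → keysDefined G ht' ψ.keys →
          keysEq G ht ht' ψ.keys
  | .exclusive =>
      ∀ hs hs', Match G ψ.Qs hs → satC G hs ψ.Cs →
        Match G ψ.Qs hs' → satC G hs' ψ.Cs →
        ∀ ht ht', Match G ψ.Qt ht → satC G ht ψ.Ct → ht ψ.x = hs ψ.x →
          Match G ψ.Qt ht' → satC G ht' ψ.Ct → ht' ψ.x = hs' ψ.x →
          keysDefined G ht ψ.keys → keysDefined G ht' ψ.keys →
          keysEq G ht ht' ψ.keys →
          hs ψ.x = hs' ψ.x

def PGKey.allVars (ψ : PGKey) : Finset Var :=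
  qvars ψ.Qs ∪ qvars ψ.Qt ∪
  (ψ.Cs ++ ψ.Ct).foldr (fun p s => p.vars ∪ s) ∅ ∪
  ψ.keys.foldr (fun k s => k.vars ∪ s) ∅ ∪ {ψ.x}

/-- Variable renaming on atoms, queries, predicates and key expressions. -/
def Atom.rename (σ : Var → Var) : Atom → Atom
  | .vertex x ls => .vertex (σ x) ls
  | .edge x e y ls => .edge (σ x) (σ e) (σ y) ls
  | .path x p y r => .path (σ x) (σ p) (σ y) r

def Query.rename (σ : Var → Var) (Q : Query) : Query := Q.map (Atom.rename σ)

def Pred.rename (σ : Var → Var) : Pred → Pred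
  | .propEq x a y b => .propEq (σ x) a (σ y) b
  | .propEqC x a c => .propEqC (σ x) a c
  | .ex x a => .ex (σ x) a
  | .idEq x y => .idEq (σ x) (σ y)
  | .propNe x a y b => .propNe (σ x) a (σ y) b
  | .propNeC x a c => .propNeC (σ x) a c
  | .idNe x y => .idNe (σ x) (σ y)

def KeyExpr.rename (σ : Var → Var) : KeyExpr → KeyExpr
  | .var v => .var (σ v)
  | .ref v a => .ref (σ v) a

/-- The existence predicates `ex(ν̄)` associated with a key expression. -/
def exPreds (ks : List KeyExpr) : List Pred :=
  ks.filterMap fun k =>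
    match k with
    | .var _ => none
    | .ref v a => some (.ex v a)

/-- The predicate expressing equality of a key-expression entry with its `σ`-copy. -/
def keyEqPred (σ : Var → Var) : KeyExpr → Pred
  | .var v => .idEq v (σ v)
  | .ref v a => .propEq v a (σ v) a

/-- The renaming that fixes `x` and otherwise applies `σ`. -/
def fixAt (x : Var) (σ : Var → Var) : Var → Var :=
  fun v => if v = x then x else σ v

/-- `G'` is an induced subgraph of `G`. -/
def InducedSubgraph (G' G : PGraph) : Prop :=
  G'.V ⊆ G.V ∧
  G'.E = G.E.filter (fun e => G.src e ∈ G'.V ∧ G.tgt e ∈ G'.V) ∧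
  ∀ o ∈ G'.V ∪ G'.E, G'.src o = G.src o ∧ G'.tgt o = G.tgt o ∧
    G'.lab o = G.lab o ∧ ∀ k, G'.prop o k = G.prop o k

/-- A constraint (given by its satisfaction relation) is expressible by a
finite set of constraints of the class `C`. -/
def Expressible (s : PGraph → Prop) (C : Set (PGraph → Prop)) : Prop :=
  ∃ Ψ : List (PGraph → Prop), (∀ ψ ∈ Ψ, ψ ∈ C) ∧ ∀ G, s G ↔ ∀ ψ ∈ Ψ, ψ G

/-- Expressiveness inclusion of constraint classes. -/
def ClassLE (C₁ C₂ : Set (PGraph → Prop)) : Prop :=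
  ∀ s ∈ C₁, Expressible s C₂

/-- Equal expressive power. -/
def ClassEquiv (C₁ C₂ : Set (PGraph → Prop)) : Prop :=
  ClassLE C₁ C₂ ∧ ClassLE C₂ C₁

/-- Strict expressiveness inclusion. -/
def ClassLT (C₁ C₂ : Set (PGraph → Prop)) : Prop :=
  ClassLE C₁ C₂ ∧ ∃ s ∈ C₂, ¬ Expressible s C₁

/-- The class GFD over the query language `L`. -/
def GFDc (L : QLang) : Set (PGraph → Prop) :=
  {s | ∃ φ : GFD, φ.wf L ∧ s = φ.sat}

/-- The class nGFD over `L`. -/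
def nGFDc (n : ℕ) (L : QLang) : Set (PGraph → Prop) :=
  {s | ∃ φ : GFD, φ.wf L ∧ φ.shared.length ≤ n ∧ s = φ.sat}

/-- The class GGD over `L`. -/
def GGDc (L : QLang) : Set (PGraph → Prop) :=
  {s | ∃ φ : GGD, φ.wf L ∧ s = φ.sat}

/-- The class nGGD over `L`. -/
def nGGDc (n : ℕ) (L : QLang) : Set (PGraph → Prop) :=
  {s | ∃ φ : GGD, φ.wf L ∧ φ.shared.length ≤ n ∧ s = φ.sat}

/-- The class PG-Keys over `L`. -/
def PGKc (L : QLang) : Set (PGraph → Prop) :=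
  {s | ∃ ψ : PGKey, ψ.wf L ∧ s = ψ.sat}

/-- The class mPG-Keys over `L`. -/
def mPGKc (L : QLang) : Set (PGraph → Prop) :=
  {s | ∃ ψ : PGKey, ψ.wf L ∧ ψ.kw = KW.mandatory ∧ s = ψ.sat}


/-! ### Auxiliary material for the proof -/

/-- A single vertex `0` with a self-loop edge `1`. -/
def G1 : PGraph where
  V := {0}
  E := {1}
  disj := by decide
  src := fun _ => 0
  tgt := fun _ => 0
  lab := fun _ => ∅
  prop := fun _ _ => none
  src_mem := by intro e _; simp
  tgt_mem := by intro e _; simp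

/-- A single isolated vertex `0`. -/
def G0 : PGraph where
  V := {0}
  E := ∅
  disj := by simp
  src := fun _ => 0
  tgt := fun _ => 0
  lab := fun _ => ∅
  prop := fun _ _ => none
  src_mem := by intro e he; simp at he
  tgt_mem := by intro e he; simp at he

lemma walkFrom_mono {G' G : PGraph} (hV : G'.V ⊆ G.V) (hE : G'.E ⊆ G.E)
    (hs : G'.src = G.src) (ht : G'.tgt = G.tgt) :
    ∀ es u, G'.walkFrom u es → G.walkFrom u es := by
  intro es
  induction es with
  | nil => intro u h; exact hV h
  | cons e es ih =>
      intro u h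
      obtain ⟨he, hsrc, hrest⟩ := h
      exact ⟨hE he, by rw [← hs]; exact hsrc, by rw [← ht]; exact ih _ hrest⟩

lemma atomSat_mono {G' G : PGraph} (hV : G'.V ⊆ G.V) (hE : G'.E ⊆ G.E)
    (hs : G'.src = G.src) (ht : G'.tgt = G.tgt) (hl : G'.lab = G.lab)
    (h : Var → Target) (a : Atom) : a.sat G' h → a.sat G h := by
  cases a with
  | vertex x ls =>
      rintro ⟨o, h1, h2, h3⟩
      exact ⟨o, h1, hV h2, by rw [← hl]; exact h3⟩
  | edge x e y ls =>
      rintro ⟨ox, oe, oy, h1, h2, h3, h4, h5, h6, h7⟩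
      exact ⟨ox, oe, oy, h1, h2, h3, hE h4, by rw [← hs]; exact h5,
        by rw [← ht]; exact h6, by rw [← hl]; exact h7⟩
  | path x p y r =>
      rintro ⟨ox, w, oy, h1, h2, h3, h4, h5, h6, word, h7, h8⟩
      refine ⟨ox, w, oy, h1, h2, h3, h4, walkFrom_mono hV hE hs ht _ _ h5, ?_,
        word, h7, by rw [← hl]; exact h8⟩
      rw [← h6]; simp [Walk.endpt, ht]

lemma propOf_eq {G' G : PGraph} (hp : G'.prop = G.prop) (h : Var → Target)
    (x : Var) (a : Key) : propOf G' h x a = propOf G h x a := by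
  unfold propOf; cases h x <;> simp [hp]

lemma predSat_iff {G' G : PGraph} (hp : G'.prop = G.prop) (h : Var → Target)
    (p : Pred) : p.sat G' h ↔ p.sat G h := by
  cases p <;> simp [Pred.sat, propOf_eq hp]

lemma satC_iff {G' G : PGraph} (hp : G'.prop = G.prop) (h : Var → Target)
    (C : List Pred) : satC G' h C ↔ satC G h C := by
  unfold satC
  exact forall₂_congr fun p _ => predSat_iff hp h p

/-- GFDs are preserved when passing to a sub-structure. -/
lemma gfd_sub {G' G : PGraph} (hV : G'.V ⊆ G.V) (hE : G'.E ⊆ G.E)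
    (hs : G'.src = G.src) (ht : G'.tgt = G.tgt) (hl : G'.lab = G.lab)
    (hp : G'.prop = G.prop) (φ : GFD) : φ.sat G → φ.sat G' := by
  intro H h hm hc
  have hm' : Match G φ.Q h := fun a ha => atomSat_mono hV hE hs ht hl h a (hm a ha)
  have hc' : satC G h φ.Cs := (satC_iff hp h φ.Cs).mp hc
  exact (satC_iff hp h φ.Ct).mpr (H h hm' hc')

/-- A constraint satisfied by `G1` but not by `G0` is not expressible in GFD. -/
lemma not_expr_gfd {s : PGraph → Prop} (h1 : s G1) (h0 : ¬ s G0) (L : QLang) :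
    ¬ Expressible s (GFDc L) := by
  rintro ⟨Ψ, hΨ, hiff⟩
  apply h0
  rw [hiff]
  intro ψ hψ
  obtain ⟨φ, _, rfl⟩ := hΨ ψ hψ
  have hG1 : φ.sat G1 := (hiff G1).mp h1 _ hψ
  exact gfd_sub (G' := G0) (G := G1) (by intro o h; exact h)
    (by intro o h; simp [G0] at h) rfl rfl rfl rfl φ hG1

/-- The 1GGD "there exists an edge". -/
def φg : GGD where
  shared := []
  Qs := []
  Cs := []
  Qt := [.edge 0 1 2 []]
  Ct := []

lemma φg_wf (L : QLang) : φg.wf L := by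
  refine ⟨?_, ?_, ?_, ?_, ?_, ?_, ?_, ?_⟩
  · intro a ha; simp [φg] at ha
  · intro a ha; simp [φg] at ha; subst ha; intro h; exact absurd h (by simp [Atom.isPath])
  · intro p hp; simp [φg] at hp
  · intro p hp; simp [φg] at hp
  · simp [φg]
  · simp [φg, qvars]
  · intro p hp; simp [φg] at hp
  · intro p hp; simp [φg] at hp

def htE : Var → Target := fun v => if v = 1 then .obj 1 else .obj 0

lemma htE_matchQt : Match G1 [Atom.edge 0 1 2 []] htE := by
  intro a ha
  simp at ha; subst ha
  exact ⟨0, 1, 0, rfl, rfl, rfl, by simp [G1], rfl, rfl, by intro l hl; simp at hl⟩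

lemma φg_sat_G1 : φg.sat G1 := by
  intro hs _ _
  exact ⟨htE, htE_matchQt, by intro v hv; simp [φg] at hv, by intro p hp; simp [φg] at hp⟩

lemma φg_not_sat_G0 : ¬ φg.sat G0 := by
  intro H
  obtain ⟨ht, hm, -, -⟩ := H (fun _ => .obj 0)
    (by intro a ha; simp [φg] at ha) (by intro p hp; simp [φg] at hp)
  obtain ⟨ox, oe, oy, -, -, -, h4, -⟩ := hm (Atom.edge 0 1 2 []) (by simp [φg])
  simp [G0] at h4

/-- The mandatory PG-Key "every vertex has an outgoing edge". -/
def ψk : PGKey where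
  x := 0
  Qs := [.vertex 0 []]
  Cs := []
  kw := .mandatory
  keys := []
  Qt := [.edge 0 1 2 []]
  Ct := []

lemma ψk_wf (L : QLang) : ψk.wf L := by
  refine ⟨?_, ?_, ?_, ?_, ?_, ?_, ?_, ?_, ?_, ?_⟩
  · intro a ha; simp [ψk] at ha; subst ha; intro h; exact absurd h (by simp [Atom.isPath])
  · intro a ha; simp [ψk] at ha; subst ha; intro h; exact absurd h (by simp [Atom.isPath])
  · intro p hp; simp [ψk] at hp
  · intro p hp; simp [ψk] at hp
  · simp [ψk, qvars, Atom.vars]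
  · simp [ψk, qvars, Atom.vars]
  · show qvars [Atom.vertex 0 []] ∩ qvars [Atom.edge 0 1 2 []] = {(0 : Var)}
    simp [qvars, Atom.vars]
  · intro p hp; simp [ψk] at hp
  · intro p hp; simp [ψk] at hp
  · intro k hk; simp [ψk] at hk

lemma ψk_sat_G1 : ψk.sat G1 := by
  show ∀ hs, Match G1 ψk.Qs hs → satC G1 hs ψk.Cs → _
  intro hs hm _
  obtain ⟨o, ho, hoV, -⟩ := hm (Atom.vertex 0 []) (by simp [ψk])
  have ho0 : o = 0 := by simpa [G1] using hoV
  subst ho0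
  refine ⟨htE, htE_matchQt, ?_, by intro p hp; simp [ψk] at hp,
    by intro k hk; simp [ψk] at hk⟩
  show htE 0 = hs 0
  rw [ho]; rfl

lemma ψk_not_sat_G0 : ¬ ψk.sat G0 := by
  intro H
  obtain ⟨ht, hm, -, -, -⟩ := H (fun _ => .obj 0)
    (by
      intro a ha; simp [ψk] at ha; subst ha
      exact ⟨0, rfl, by simp [G0], by intro l hl; simp at hl⟩)
    (by intro p hp; simp [ψk] at hp)
  obtain ⟨ox, oe, oy, -, -, -, h4, -⟩ := hm (Atom.edge 0 1 2 []) (by simp [ψk])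
  simp [G0] at h4

/-- For each of the four query languages, GFD is distinct in expressive
power from 1GGD, mPG-Keys and PG-Keys. -/
theorem gfd_ne_1ggd_mpgkeys_pgkeys :
    ∀ L ∈ [CQeq, CQeqNe, CRPQeq, CRPQeqNe],
      ¬ ClassEquiv (GFDc L) (nGGDc 1 L) ∧
      ¬ ClassEquiv (GFDc L) (mPGKc L) ∧
      ¬ ClassEquiv (GFDc L) (PGKc L) := by
  intro L _
  refine ⟨?_, ?_, ?_⟩
  · rintro ⟨-, hle⟩
    exact not_expr_gfd φg_sat_G1 φg_not_sat_G0 L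
      (hle _ ⟨φg, φg_wf L, by simp [φg], rfl⟩)
  · rintro ⟨-, hle⟩
    exact not_expr_gfd ψk_sat_G1 ψk_not_sat_G0 L
      (hle _ ⟨ψk, ψk_wf L, rfl, rfl⟩)
  · rintro ⟨-, hle⟩
    exact not_expr_gfd ψk_sat_G1 ψk_not_sat_G0 L
      (hle _ ⟨ψk, ψk_wf L, rfl⟩)

end PGC
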